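/- Let L ⊆ Ã* be a language of reduced words with μ(L) = G, let ν : ℕ → ℕ be non-decreasing, and suppose (G, L) satisfies Property BP_ν. Let H, K ≤ G be L-quasi-convex subgroups with common constant of L-quasi-convexity k, and suppose K is infinite. Then: (i) there exists g ∈ G with K^g ≤ H if and only if there exists g ∈ G with |g| ≤ 2ν(k) and K^g ≤ H; (ii) there exists g ∈ G with H = K^g if and only if there exists g ∈ G with |g| ≤ 2ν(k) and H = K^g. -/
import Mathlib


open List

/-- A word over the alphabet Ã = A ∪ A⁻¹ is a `List (A × Bool)`: the letter `(a, true)`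
stands for `a` and `(a, false)` for the formal inverse `a⁻¹`. A word is *reduced* if it
has no factor `a·a⁻¹` or `a⁻¹·a`. -/
def Reduced {A : Type*} (w : List (A × Bool)) : Prop :=
  w.Chain' fun p q => ¬(p.1 = q.1 ∧ q.2 = !p.2)

variable {A : Type*} [Fintype A] {G : Type*} [Group G]

/-- Evaluation in `G` of a word over Ã, determined by the images `f a` of the letters.
This is the (inverse-respecting) monoid homomorphism μ : Ã* → G. -/
def eval (f : A → G) (w : List (A × Bool)) : G :=
  (w.map fun p => if p.2 then f p.1 else (f p.1)⁻¹).prod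

/-- Word length of `g ∈ G` with respect to the generators `A`:
the least length of a word over Ã mapping onto `g`. -/
noncomputable def wlen (f : A → G) (g : G) : ℕ :=
  sInf {n | ∃ w : List (A × Bool), eval f w = g ∧ w.length = n}

/-- A rational structure: `L` is a regular language of reduced words with μ(L) = G. -/
def RationalStructure (f : A → G) (L : Set (List (A × Bool))) : Prop :=
  Language.IsRegular (L : Language (A × Bool)) ∧ (∀ w ∈ L, Reduced w) ∧
    ∀ g : G, ∃ w ∈ L, eval f w = g

/-- `H` is L-quasi-convex with constant `k`: for every `w ∈ L` with `μ(w) ∈ H` and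
every prefix `u` of `w`, there is `h ∈ H` with `|h⁻¹ μ(u)| ≤ k`. -/
def QCW (f : A → G) (L : Set (List (A × Bool))) (H : Subgroup G) (k : ℕ) : Prop :=
  ∀ w ∈ L, eval f w ∈ H → ∀ u, u <+: w → ∃ h ∈ H, wlen f (h⁻¹ * eval f u) ≤ k

/-- The set of right cosets `H·μ(u)` where `u` ranges over prefixes of words
`w ∈ L` with `μ(w) ∈ H` (the vertex set of the Stallings graph Γ_L(H)). -/
def VL (f : A → G) (L : Set (List (A × Bool))) (H : Subgroup G) : Set (Set G) :=
  {S | ∃ w ∈ L, eval f w ∈ H ∧ ∃ u, u <+: w ∧ S = {x | ∃ h ∈ H, x = h * eval f u}}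

/-- The left coset g·H as a subset of G. -/
def lcoset (g : G) (H : Subgroup G) : Set G := {x | ∃ h ∈ H, x = g * h}

/-- The right coset H·g as a subset of G. -/
def rcoset (H : Subgroup G) (g : G) : Set G := {x | ∃ h ∈ H, x = h * g}

/-- The conjugate subgroup H^g = g⁻¹Hg. -/
def conjG {G : Type*} [Group G] (H : Subgroup G) (g : G) : Subgroup G :=
  Subgroup.map ((MulAut.conj g⁻¹).toMonoidHom) H

/-- The double coset H·g·K as a subset of G. -/
def dcoset (H : Subgroup G) (g : G) (K : Subgroup G) : Set G :=
  {x | ∃ h ∈ H, ∃ k ∈ K, x = h * g * k}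

/-- Property BP_ν: whenever H, K are L-quasi-convex subgroups with common constant k,
and K, g₁H, …, g_nH are pairwise distinct subsets of G such that
K ∩ g₁Hg₁⁻¹ ∩ … ∩ g_nHg_n⁻¹ is infinite, there exists z ∈ G such that the ball of
center z and radius ν(k) (in the word metric) meets K and each coset g_iH. -/
def BP (f : A → G) (L : Set (List (A × Bool))) (ν : ℕ → ℕ) : Prop :=
  ∀ (H K : Subgroup G) (k : ℕ), QCW f L H k → QCW f L K k →
    ∀ n : ℕ, 1 ≤ n → ∀ g : Fin n → G,
      Function.Injective
        (Fin.cons (K : Set G) (fun i => lcoset (g i) H) : Fin (n + 1) → Set G) →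
      (((K ⊓ ⨅ i, conjG H (g i)⁻¹ : Subgroup G) : Set G)).Infinite →
      ∃ z : G, (∃ w ∈ K, wlen f (z⁻¹ * w) ≤ ν k) ∧
        ∀ i, ∃ w ∈ lcoset (g i) H, wlen f (z⁻¹ * w) ≤ ν k

lemma mem_conjG {K : Subgroup G} {g x : G} : x ∈ conjG K g ↔ g * x * g⁻¹ ∈ K := by
  simp only [conjG, Subgroup.mem_map, MulEquiv.coe_toMonoidHom, MulAut.conj_apply, inv_inv]
  constructor
  · rintro ⟨y, hy, rfl⟩
    have e : g * (g⁻¹ * y * g) * g⁻¹ = y := by group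
    rwa [e]
  · intro h
    exact ⟨_, h, by group⟩

lemma conj_mem_iff (K : Subgroup G) {a : G} (ha : a ∈ K) (x : G) :
    a * x * a⁻¹ ∈ K ↔ x ∈ K := by
  constructor
  · intro h
    have h2 := K.mul_mem (K.mul_mem (K.inv_mem ha) h) ha
    have e : a⁻¹ * (a * x * a⁻¹) * a = x := by group
    rwa [e] at h2
  · intro h
    exact K.mul_mem (K.mul_mem ha h) (K.inv_mem ha)

lemma eval_append (f : A → G) (u v : List (A × Bool)) :
    eval f (u ++ v) = eval f u * eval f v := by
  simp [eval]

lemma eval_inv (f : A → G) (w : List (A × Bool)) :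
    eval f (w.reverse.map fun p => (p.1, !p.2)) = (eval f w)⁻¹ := by
  induction w with
  | nil => simp [eval]
  | cons p w ih =>
    have e : ((p :: w).reverse.map fun p => (p.1, !p.2))
        = (w.reverse.map fun p => (p.1, !p.2)) ++ [(p.1, !p.2)] := by simp
    rw [e, eval_append, ih]
    have hp : eval f [(p.1, !p.2)] = (eval f [p])⁻¹ := by
      cases hb : p.2 <;> simp [eval, hb]
    rw [hp]
    have e2 : eval f (p :: w) = eval f [p] * eval f w := by
      simpa using eval_append f [p] w
    rw [e2, mul_inv_rev]

lemma wlen_le (f : A → G) {g : G} (w : List (A × Bool)) (h : eval f w = g) :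
    wlen f g ≤ w.length :=
  Nat.sInf_le ⟨w, h, rfl⟩

lemma wlen_exists (f : A → G) (hsurj : ∀ g : G, ∃ w, eval f w = g) (g : G) :
    ∃ w : List (A × Bool), eval f w = g ∧ w.length = wlen f g := by
  obtain ⟨w, hw⟩ := hsurj g
  exact Nat.sInf_mem (⟨w.length, w, hw, rfl⟩ :
    {n | ∃ w : List (A × Bool), eval f w = g ∧ w.length = n}.Nonempty)

lemma wlen_mul_le (f : A → G) (hsurj : ∀ g : G, ∃ w, eval f w = g) (x y : G) :
    wlen f (x * y) ≤ wlen f x + wlen f y := by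
  obtain ⟨u, hu, hul⟩ := wlen_exists f hsurj x
  obtain ⟨v, hv, hvl⟩ := wlen_exists f hsurj y
  calc wlen f (x * y) ≤ (u ++ v).length := wlen_le f _ (by rw [eval_append, hu, hv])
  _ = wlen f x + wlen f y := by simp [hul, hvl]

lemma wlen_inv_le (f : A → G) (hsurj : ∀ g : G, ∃ w, eval f w = g) (x : G) :
    wlen f x⁻¹ ≤ wlen f x := by
  obtain ⟨u, hu, hul⟩ := wlen_exists f hsurj x
  calc wlen f x⁻¹ ≤ (u.reverse.map fun p => (p.1, !p.2)).length :=
        wlen_le f _ (by rw [eval_inv, hu])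
  _ = wlen f x := by simp [hul]

lemma bp_key (f : A → G) (L : Set (List (A × Bool)))
    (hsurj : ∀ g : G, ∃ w, eval f w = g)
    (ν : ℕ → ℕ) (hBP : BP f L ν)
    (H K : Subgroup G) (k : ℕ) (hH : QCW f L H k) (hK : QCW f L K k)
    (hKinf : ((K : Set G)).Infinite) (g : G)
    (hle : K ≤ conjG H g⁻¹) (hne : (K : Set G) ≠ lcoset g H) :
    ∃ a ∈ K, ∃ b ∈ H, wlen f (a⁻¹ * (g * b)) ≤ 2 * ν k := by
  have hinj : Function.Injective
      (Fin.cons (K : Set G) (fun _ : Fin 1 => lcoset g H) : Fin 2 → Set G) := by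
    have h0 : (Fin.cons (K : Set G) (fun _ : Fin 1 => lcoset g H) : Fin 2 → Set G) 0 = K :=
      Fin.cons_zero _ _
    have h1 : (Fin.cons (K : Set G) (fun _ : Fin 1 => lcoset g H) : Fin 2 → Set G) 1
        = lcoset g H := by
      have e : (1 : Fin 2) = Fin.succ 0 := rfl
      rw [e, Fin.cons_succ]
    intro i j hij
    match i, j with
    | 0, 0 => rfl
    | 1, 1 => rfl
    | 0, 1 => rw [h0, h1] at hij; exact absurd hij hne
    | 1, 0 => rw [h0, h1] at hij; exact absurd hij.symm hne
  have hKle : K ≤ K ⊓ ⨅ i : Fin 1, conjG H ((fun _ : Fin 1 => g) i)⁻¹ :=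
    le_inf le_rfl (le_iInf fun _ => hle)
  have hinf : (((K ⊓ ⨅ i : Fin 1, conjG H ((fun _ : Fin 1 => g) i)⁻¹ : Subgroup G) : Set G)).Infinite :=
    hKinf.mono hKle
  obtain ⟨z, ⟨a, haK, hla⟩, hall⟩ := hBP H K k hH hK 1 le_rfl (fun _ => g) hinj hinf
  obtain ⟨w', ⟨b, hbH, rfl⟩, hlw⟩ := hall 0
  refine ⟨a, haK, b, hbH, ?_⟩
  have e : a⁻¹ * (g * b) = (z⁻¹ * a)⁻¹ * (z⁻¹ * (g * b)) := by group
  calc wlen f (a⁻¹ * (g * b))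
      ≤ wlen f (z⁻¹ * a)⁻¹ + wlen f (z⁻¹ * (g * b)) := by
        rw [e]; exact wlen_mul_le f hsurj _ _
    _ ≤ ν k + ν k := by
        have h2 := wlen_inv_le f hsurj (z⁻¹ * a)
        omega
    _ = 2 * ν k := by ring

/-- under Property BP_ν, for L-quasi-convex H, K with common constant k
and K infinite: (i) some conjugate of K is contained in H iff some conjugate K^g with
|g| ≤ 2ν(k) is; (ii) H is a conjugate of K iff H = K^g for some g with |g| ≤ 2ν(k). -/
theorem stmt12 (f : A → G) (L : Set (List (A × Bool)))
    (hred : ∀ w ∈ L, Reduced w) (hsurj : ∀ g : G, ∃ w ∈ L, eval f w = g)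
    (ν : ℕ → ℕ) (hν : Monotone ν) (hBP : BP f L ν)
    (H K : Subgroup G) (k : ℕ) (hH : QCW f L H k) (hK : QCW f L K k)
    (hKinf : ((K : Set G)).Infinite) :
    ((∃ g : G, conjG K g ≤ H) ↔ ∃ g : G, wlen f g ≤ 2 * ν k ∧ conjG K g ≤ H) ∧
    ((∃ g : G, H = conjG K g) ↔ ∃ g : G, wlen f g ≤ 2 * ν k ∧ H = conjG K g) := by
  have hsurj' : ∀ g : G, ∃ w, eval f w = g := fun g => by
    obtain ⟨w, _, hw⟩ := hsurj g; exact ⟨w, hw⟩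
  have hone : wlen f (1 : G) ≤ 2 * ν k := by
    have h0 : wlen f (1 : G) ≤ ([] : List (A × Bool)).length :=
      wlen_le f [] (by simp [eval])
    simpa using h0.trans (Nat.zero_le _)
  constructor
  · constructor
    · rintro ⟨g, hg⟩
      by_cases hne : (K : Set G) = lcoset g H
      · have h1 : (1 : G) ∈ lcoset g H := hne ▸ K.one_mem
        obtain ⟨h0, hh0, hgh0⟩ := h1
        have hgH : g ∈ H := by
          have e : g = h0⁻¹ := eq_inv_of_mul_eq_one_left hgh0.symm
          rw [e]; exact H.inv_mem hh0
        refine ⟨1, hone, fun x hx => ?_⟩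
        rw [mem_conjG] at hx
        simp only [one_mul, inv_one, mul_one] at hx
        have hx2 : x ∈ lcoset g H := hne ▸ hx
        obtain ⟨h, hh, rfl⟩ := hx2
        exact H.mul_mem hgH hh
      · have hle : K ≤ conjG H g⁻¹ := by
          intro x hx
          rw [mem_conjG, inv_inv]
          have h2 : g⁻¹ * x * g ∈ conjG K g := by
            rw [mem_conjG]
            have e : g * (g⁻¹ * x * g) * g⁻¹ = x := by group
            rwa [e]
          exact hg h2
        obtain ⟨a, haK, b, hbH, hlen⟩ :=
          bp_key f L hsurj' ν hBP H K k hH hK hKinf g hle hne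
        refine ⟨a⁻¹ * (g * b), hlen, fun x hx => ?_⟩
        rw [mem_conjG] at hx
        have h1 : g * (b * x * b⁻¹) * g⁻¹ ∈ K := by
          have e : g * (b * x * b⁻¹) * g⁻¹
              = a * ((a⁻¹ * (g * b)) * x * (a⁻¹ * (g * b))⁻¹) * a⁻¹ := by group
          rw [e, conj_mem_iff K haK]
          exact hx
        have h2 : b * x * b⁻¹ ∈ H := hg (mem_conjG.mpr h1)
        exact (conj_mem_iff H hbH x).mp h2
    · rintro ⟨g, _, hg⟩; exact ⟨g, hg⟩
  · constructor
    · rintro ⟨g, hg⟩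
      by_cases hne : (K : Set G) = lcoset g H
      · have h1 : (1 : G) ∈ lcoset g H := hne ▸ K.one_mem
        obtain ⟨h0, hh0, hgh0⟩ := h1
        have hgiH : g⁻¹ ∈ H := by
          have e : h0 = g⁻¹ := eq_inv_of_mul_eq_one_right hgh0.symm
          rwa [e] at hh0
        have hgK : g ∈ K := by
          have h2 : g⁻¹ ∈ conjG K g := hg ▸ hgiH
          rw [mem_conjG] at h2
          have e : g * g⁻¹ * g⁻¹ = g⁻¹ := by group
          rw [e] at h2
          simpa using K.inv_mem h2
        refine ⟨1, hone, ?_⟩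
        rw [hg]
        ext x
        rw [mem_conjG, mem_conjG]
        simp only [one_mul, inv_one, mul_one]
        exact conj_mem_iff K hgK x
      · have hle : K ≤ conjG H g⁻¹ := by
          intro x hx
          rw [mem_conjG, inv_inv, hg, mem_conjG]
          have e : g * (g⁻¹ * x * g) * g⁻¹ = x := by group
          rwa [e]
        obtain ⟨a, haK, b, hbH, hlen⟩ :=
          bp_key f L hsurj' ν hBP H K k hH hK hKinf g hle hne
        refine ⟨a⁻¹ * (g * b), hlen, ?_⟩
        ext x
        constructor
        · intro hx
          rw [mem_conjG]
          have e : (a⁻¹ * (g * b)) * x * (a⁻¹ * (g * b))⁻¹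
              = a⁻¹ * (g * (b * x * b⁻¹) * g⁻¹) * a := by group
          rw [e]
          have hbx : b * x * b⁻¹ ∈ H := (conj_mem_iff H hbH x).mpr hx
          have hK1 : g * (b * x * b⁻¹) * g⁻¹ ∈ K := mem_conjG.mp (hg ▸ hbx)
          have h3 := (conj_mem_iff K (K.inv_mem haK) _).mpr hK1
          simpa using h3
        · intro hx
          rw [mem_conjG] at hx
          have e : (a⁻¹ * (g * b)) * x * (a⁻¹ * (g * b))⁻¹
              = a⁻¹ * (g * (b * x * b⁻¹) * g⁻¹) * a := by group
          rw [e] at hx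
          have h1 : g * (b * x * b⁻¹) * g⁻¹ ∈ K := by
            have h2 := K.mul_mem (K.mul_mem haK hx) (K.inv_mem haK)
            have e2 : a * (a⁻¹ * (g * (b * x * b⁻¹) * g⁻¹) * a) * a⁻¹
                = g * (b * x * b⁻¹) * g⁻¹ := by group
            rwa [e2] at h2
          have h2 : b * x * b⁻¹ ∈ H := by rw [hg]; exact mem_conjG.mpr h1
          exact (conj_mem_iff H hbH x).mp h2
    · rintro ⟨g, _, hg⟩; exact ⟨g, hg⟩
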